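/- Let A, Â be real n × m matrices with rank(A) = p, σ_p(A) > 0, rank(Â) ≤ p, and ‖Â − A‖_op ≤ σ_p(A)/2. Then rank(Â) = p and σ_p(Â) ≥ σ_p(A)/2; consequently, any real m × n matrix B satisfying the Penrose equations for Â satisfies ‖B‖_op ≤ 2/σ_p(A). -/

import Mathlib

/-!
Weyl's inequality `σ_p(Â) ≥ σ_p(A) - ‖Â - A‖` gives `σ_p(Â) ≥ σ_p(A)/2 > 0`, and a positive
`σ_p(Â)` forces `rank Â ≥ p`. For a Penrose inverse `B` of `Â`, the matrix `P = BÂ` is the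
orthogonal projection onto the row space of `Â`, which has dimension `p`. A `p`-dimensional
subspace on which `Â` is bounded below by some `c > 0` meets `ker P ⊆ ker Â` trivially, so `P`
maps it onto the row space, without increasing norms and with `ÂPv = Âv`; hence `Â` is bounded
below by `σ_p(Â)` on the whole row space. Since `B y` lies in the row space and
`‖ÂBy‖ ≤ ‖y‖` (`ÂB` is an orthogonal projection too), `‖B‖ ≤ 1/σ_p(Â)`.
-/

open Matrix

/-- Euclidean norm of a finitely indexed real vector. -/
noncomputable def euclNorm {m : Type*} [Fintype m] (v : m → ℝ) : ℝ :=
  Real.sqrt (∑ i, v i ^ 2)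

/-- The `p`-th largest singular value of a real matrix, via the Courant–Fischer
max–min characterization. -/
noncomputable def singularValue {n m : Type*} [Fintype n] [Fintype m] (p : ℕ)
    (A : Matrix n m ℝ) : ℝ :=
  sSup {r : ℝ | 0 ≤ r ∧ ∃ V : Submodule ℝ (m → ℝ), Module.finrank ℝ V = p ∧
    ∀ x ∈ V, r * euclNorm x ≤ euclNorm (A.mulVec x)}

/-- Operator (spectral) norm of a real matrix. -/
noncomputable def opNorm {n m : Type*} [Fintype n] [Fintype m] (A : Matrix n m ℝ) : ℝ :=
  sSup {r : ℝ | ∃ x : m → ℝ, euclNorm x ≤ 1 ∧ r = euclNorm (A.mulVec x)}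

/-- `B` satisfies the Moore–Penrose (Penrose) equations for `A`. -/
def IsPenroseInverse {n m : Type*} [Fintype n] [Fintype m]
    (A : Matrix n m ℝ) (B : Matrix m n ℝ) : Prop :=
  A * B * A = A ∧ B * A * B = B ∧ (A * B)ᵀ = A * B ∧ (B * A)ᵀ = B * A

section EuclNorm

variable {m : Type*} [Fintype m]

theorem euclNorm_eq_norm (v : m → ℝ) : euclNorm v = ‖WithLp.toLp 2 v‖ := by
  simp only [euclNorm, EuclideanSpace.norm_eq, Real.norm_eq_abs, sq_abs]

theorem euclNorm_eq_sqrt_dotProduct (v : m → ℝ) : euclNorm v = √(v ⬝ᵥ v) := by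
  simp only [euclNorm, dotProduct, sq]

theorem euclNorm_nonneg (v : m → ℝ) : 0 ≤ euclNorm v :=
  Real.sqrt_nonneg _

theorem euclNorm_eq_zero {v : m → ℝ} : euclNorm v = 0 ↔ v = 0 := by
  rw [euclNorm_eq_norm, norm_eq_zero, WithLp.toLp_eq_zero]

theorem euclNorm_pos {v : m → ℝ} (hv : v ≠ 0) : 0 < euclNorm v :=
  (euclNorm_nonneg v).lt_of_ne' (euclNorm_eq_zero.not.mpr hv)

@[simp]
theorem euclNorm_zero : euclNorm (0 : m → ℝ) = 0 :=
  euclNorm_eq_zero.mpr rfl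

theorem euclNorm_smul (c : ℝ) (v : m → ℝ) : euclNorm (c • v) = |c| * euclNorm v := by
  rw [euclNorm_eq_norm, euclNorm_eq_norm, WithLp.toLp_smul, norm_smul, Real.norm_eq_abs]

theorem euclNorm_sub_le (u v : m → ℝ) : euclNorm (u - v) ≤ euclNorm u + euclNorm v := by
  simpa only [euclNorm_eq_norm, WithLp.toLp_sub] using norm_sub_le _ _

theorem euclNorm_mulVec_le_of_isSymm_of_isIdempotentElem {Q : Matrix m m ℝ}
    (hsymm : Q.IsSymm) (hidem : IsIdempotentElem Q) (y : m → ℝ) :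
    euclNorm (Q *ᵥ y) ≤ euclNorm y := by
  set z := Q *ᵥ y
  have hzz : z ⬝ᵥ z = y ⬝ᵥ z := by
    rw [dotProduct_comm y, dotProduct_mulVec, ← mulVec_transpose, hsymm, mulVec_mulVec, hidem]
  have hpythagoras : y ⬝ᵥ y = z ⬝ᵥ z + (y - z) ⬝ᵥ (y - z) := by
    rw [sub_dotProduct, dotProduct_sub, dotProduct_sub, dotProduct_comm z y, hzz]
    ring
  rw [euclNorm_eq_sqrt_dotProduct, euclNorm_eq_sqrt_dotProduct]
  gcongr
  have hnonneg := dotProduct_self_star_nonneg (y - z)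
  rw [star_trivial] at hnonneg
  linarith

end EuclNorm

theorem LinearMap.finrank_map_eq_of_disjoint_ker {K E F : Type*} [Field K] [AddCommGroup E]
    [Module K E] [AddCommGroup F] [Module K F] {f : E →ₗ[K] F} {V : Submodule K E}
    (h : Disjoint V (LinearMap.ker f)) : Module.finrank K (V.map f) = Module.finrank K V := by
  have hinj : Function.Injective (f ∘ₗ V.subtype) := by
    rw [← LinearMap.ker_eq_bot, Submodule.eq_bot_iff]
    rintro ⟨x, hxV⟩ hx
    exact Subtype.ext (Submodule.disjoint_def.mp h x hxV hx)
  rw [← LinearMap.finrank_range_of_inj hinj, LinearMap.range_comp, Submodule.range_subtype]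

section MatrixNorms

variable {n m : Type*} [Fintype n] [Fintype m]

theorem bddAbove_opNorm_set (M : Matrix n m ℝ) :
    BddAbove {r : ℝ | ∃ x : m → ℝ, euclNorm x ≤ 1 ∧ r = euclNorm (M *ᵥ x)} := by
  classical
  open scoped Matrix.Norms.L2Operator in
  refine ⟨‖M‖, ?_⟩
  rintro r ⟨x, hx, rfl⟩
  rw [euclNorm_eq_norm] at hx ⊢
  calc ‖WithLp.toLp 2 (M *ᵥ x)‖ ≤ ‖M‖ * ‖WithLp.toLp 2 x‖ := M.l2_opNorm_mulVec (WithLp.toLp 2 x)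
    _ ≤ ‖M‖ := mul_le_of_le_one_right (norm_nonneg M) hx

theorem opNorm_nonneg (M : Matrix n m ℝ) : 0 ≤ opNorm M :=
  le_csSup (bddAbove_opNorm_set M) ⟨0, by simp⟩

theorem euclNorm_mulVec_le_opNorm (M : Matrix n m ℝ) (x : m → ℝ) :
    euclNorm (M *ᵥ x) ≤ opNorm M * euclNorm x := by
  rcases eq_or_ne x 0 with rfl | hx
  · simp
  have hpos : 0 < euclNorm x := euclNorm_pos hx
  have hunit : euclNorm ((euclNorm x)⁻¹ • x) = 1 := by
    rw [euclNorm_smul, abs_inv, abs_of_pos hpos, inv_mul_cancel₀ hpos.ne']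
  have hle : (euclNorm x)⁻¹ * euclNorm (M *ᵥ x) ≤ opNorm M := by
    refine le_csSup (bddAbove_opNorm_set M) ⟨_, hunit.le, ?_⟩
    rw [mulVec_smul, euclNorm_smul, abs_inv, abs_of_pos hpos]
  rwa [inv_mul_le_iff₀ hpos, mul_comm] at hle

theorem opNorm_le_of_forall {M : Matrix n m ℝ} {C : ℝ}
    (h : ∀ x : m → ℝ, euclNorm x ≤ 1 → euclNorm (M *ᵥ x) ≤ C) : opNorm M ≤ C :=
  csSup_le ⟨0, 0, by simp⟩ fun _ ⟨x, hx, hr⟩ => hr ▸ h x hx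

def BoundedBelowOn (M : Matrix n m ℝ) (V : Submodule ℝ (m → ℝ)) (s : ℝ) : Prop :=
  ∀ x ∈ V, s * euclNorm x ≤ euclNorm (M *ᵥ x)

theorem BoundedBelowOn.disjoint_ker {M : Matrix n m ℝ} {V : Submodule ℝ (m → ℝ)} {s : ℝ}
    (h : BoundedBelowOn M V s) (hs : 0 < s) : Disjoint V (LinearMap.ker M.mulVecLin) := by
  refine Submodule.disjoint_def.mpr fun x hxV hx => ?_
  have hbound := h x hxV
  rw [show M *ᵥ x = 0 from hx, euclNorm_zero] at hbound
  exact euclNorm_eq_zero.mp <|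
    le_antisymm (nonpos_of_mul_nonpos_right hbound hs) (euclNorm_nonneg x)

theorem BoundedBelowOn.le_opNorm {M : Matrix n m ℝ} {V : Submodule ℝ (m → ℝ)} {s : ℝ}
    (h : BoundedBelowOn M V s) (hV : V ≠ ⊥) : s ≤ opNorm M := by
  obtain ⟨x, hxV, hx⟩ := Submodule.exists_mem_ne_zero_of_ne_bot hV
  have hpos : 0 < euclNorm x := euclNorm_pos hx
  exact le_of_mul_le_mul_right ((h x hxV).trans (euclNorm_mulVec_le_opNorm M x)) hpos

theorem singularValue_eq_sSup (p : ℕ) (M : Matrix n m ℝ) :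
    singularValue p M = sSup {s : ℝ | 0 ≤ s ∧ ∃ V : Submodule ℝ (m → ℝ),
      Module.finrank ℝ V = p ∧ BoundedBelowOn M V s} :=
  rfl

theorem singularValue_nonneg (p : ℕ) (M : Matrix n m ℝ) : 0 ≤ singularValue p M :=
  Real.sSup_nonneg fun _ hr => hr.1

@[simp]
theorem singularValue_zero_left (M : Matrix n m ℝ) : singularValue 0 M = 0 := by
  refine Real.sSup_of_not_bddAbove fun ⟨b, hb⟩ => ?_
  have hmem : max b 0 + 1 ∈ {r : ℝ | 0 ≤ r ∧ ∃ V : Submodule ℝ (m → ℝ),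
      Module.finrank ℝ V = 0 ∧ BoundedBelowOn M V r} :=
    ⟨by positivity, ⊥, finrank_bot ℝ _, fun x hx => by simp [(Submodule.mem_bot ℝ).mp hx]⟩
  linarith [hb hmem, le_max_left b 0]

theorem BoundedBelowOn.le_singularValue {p : ℕ} {M : Matrix n m ℝ} {V : Submodule ℝ (m → ℝ)}
    {s : ℝ} (h : BoundedBelowOn M V s) (hs : 0 ≤ s) (hV : Module.finrank ℝ V = p)
    (hp : p ≠ 0) : s ≤ singularValue p M := by
  refine le_csSup ⟨opNorm M, ?_⟩ ⟨hs, V, hV, h⟩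
  rintro r ⟨-, W, hW, hWr⟩
  exact BoundedBelowOn.le_opNorm hWr fun hbot => hp (by simp [← hW, hbot])

theorem singularValue_le_of_forall {p : ℕ} {M : Matrix n m ℝ} {b : ℝ} (hb : 0 ≤ b)
    (h : ∀ s, 0 < s → ∀ V : Submodule ℝ (m → ℝ), Module.finrank ℝ V = p →
      BoundedBelowOn M V s → s ≤ b) : singularValue p M ≤ b :=
  Real.sSup_le (fun _ ⟨hs, V, hV, hsV⟩ => hs.eq_or_lt.elim (· ▸ hb) (h _ · V hV hsV)) hb

theorem exists_boundedBelowOn_of_lt_singularValue {p : ℕ} {M : Matrix n m ℝ} {r : ℝ}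
    (hr : 0 ≤ r) (h : r < singularValue p M) :
    ∃ s, r < s ∧ ∃ V : Submodule ℝ (m → ℝ), Module.finrank ℝ V = p ∧ BoundedBelowOn M V s := by
  rw [singularValue_eq_sSup] at h
  have hne : {s : ℝ | 0 ≤ s ∧ ∃ V : Submodule ℝ (m → ℝ),
      Module.finrank ℝ V = p ∧ BoundedBelowOn M V s}.Nonempty := by
    by_contra hempty
    rw [Set.not_nonempty_iff_eq_empty.mp hempty, Real.sSup_empty] at h
    exact hr.not_gt h
  obtain ⟨s, ⟨-, hsV⟩, hrs⟩ := exists_lt_of_lt_csSup hne h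
  exact ⟨s, hrs, hsV⟩

theorem BoundedBelowOn.finrank_le_rank {M : Matrix n m ℝ} {V : Submodule ℝ (m → ℝ)} {s : ℝ}
    (h : BoundedBelowOn M V s) (hs : 0 < s) : Module.finrank ℝ V ≤ M.rank := by
  rw [← LinearMap.finrank_map_eq_of_disjoint_ker (h.disjoint_ker hs)]
  exact Submodule.finrank_mono LinearMap.map_le_range

theorem le_rank_of_singularValue_pos {p : ℕ} {M : Matrix n m ℝ} (h : 0 < singularValue p M) :
    p ≤ M.rank := by
  obtain ⟨s, hs, V, rfl, hsV⟩ := exists_boundedBelowOn_of_lt_singularValue le_rfl h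
  exact hsV.finrank_le_rank hs

theorem singularValue_sub_opNorm_le (p : ℕ) (A B : Matrix n m ℝ) :
    singularValue p A - opNorm (B - A) ≤ singularValue p B := by
  rcases eq_or_ne p 0 with rfl | hp
  · simp [opNorm_nonneg]
  refine le_of_forall_lt fun c hc => ?_
  rcases lt_or_ge c 0 with hc0 | hc0
  · exact hc0.trans_le (singularValue_nonneg p B)
  obtain ⟨s, hs, V, hV, hsV⟩ := exists_boundedBelowOn_of_lt_singularValue
    (add_nonneg hc0 (opNorm_nonneg (B - A))) (lt_sub_iff_add_lt.mp hc)
  have hbound : BoundedBelowOn B V (s - opNorm (B - A)) := fun x hx => by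
    have htri : euclNorm (A *ᵥ x) ≤ euclNorm (B *ᵥ x) + euclNorm ((B - A) *ᵥ x) := by
      simpa [sub_mulVec] using euclNorm_sub_le (B *ᵥ x) ((B - A) *ᵥ x)
    linarith [hsV x hx, euclNorm_mulVec_le_opNorm (B - A) x]
  exact (lt_sub_iff_add_lt.mpr hs).trans_le (hbound.le_singularValue (by linarith) hV hp)

theorem BoundedBelowOn.range_projection {M : Matrix n m ℝ} {P : Matrix m m ℝ}
    (hsymm : P.IsSymm) (hidem : IsIdempotentElem P) (hMP : M * P = M)
    {V : Submodule ℝ (m → ℝ)} {s : ℝ} (h : BoundedBelowOn M V s) (hs : 0 < s)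
    (hV : Module.finrank ℝ V = P.rank) : BoundedBelowOn M (LinearMap.range P.mulVecLin) s := by
  have hker : LinearMap.ker P.mulVecLin ≤ LinearMap.ker M.mulVecLin := fun v hv => by
    simp only [LinearMap.mem_ker, mulVecLin_apply] at hv ⊢
    rw [← hMP, ← mulVec_mulVec, hv, mulVec_zero]
  have hmap : V.map P.mulVecLin = LinearMap.range P.mulVecLin :=
    Submodule.eq_of_le_of_finrank_eq LinearMap.map_le_range <|
      (LinearMap.finrank_map_eq_of_disjoint_ker ((h.disjoint_ker hs).mono_right hker)).trans hV
  rintro x hx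
  obtain ⟨v, hvV, rfl⟩ := hmap ▸ hx
  calc s * euclNorm (P *ᵥ v) ≤ s * euclNorm v := by
        gcongr
        exact euclNorm_mulVec_le_of_isSymm_of_isIdempotentElem hsymm hidem v
    _ ≤ euclNorm (M *ᵥ v) := h v hvV
    _ = euclNorm (M *ᵥ (P *ᵥ v)) := by rw [mulVec_mulVec, hMP]

theorem singularValue_mul_euclNorm_le_of_projection {p : ℕ} {M : Matrix n m ℝ}
    {P : Matrix m m ℝ} (hsymm : P.IsSymm) (hidem : IsIdempotentElem P) (hMP : M * P = M)
    (hrank : P.rank = p) {x : m → ℝ} (hx : P *ᵥ x = x) :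
    singularValue p M * euclNorm x ≤ euclNorm (M *ᵥ x) := by
  rcases eq_or_ne x 0 with rfl | hx0
  · simp
  have hpos := euclNorm_pos hx0
  rw [← le_div_iff₀ hpos]
  refine singularValue_le_of_forall (div_nonneg (euclNorm_nonneg _) hpos.le) fun s hs V hV hsV => ?_
  rw [le_div_iff₀ hpos]
  exact hsV.range_projection hsymm hidem hMP hs (hV.trans hrank.symm) x ⟨x, hx⟩

theorem IsPenroseInverse.opNorm_le_inv_singularValue {p : ℕ} {M : Matrix n m ℝ}
    {B : Matrix m n ℝ} (hB : IsPenroseInverse M B)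
    (hrank : M.rank = p) (hσ : 0 < singularValue p M) : opNorm B ≤ (singularValue p M)⁻¹ := by
  obtain ⟨hMBM, hBMB, hMBsymm, hBMsymm⟩ := hB
  have hMBidem : IsIdempotentElem (M * B) := by rw [IsIdempotentElem, ← Matrix.mul_assoc, hMBM]
  have hBMidem : IsIdempotentElem (B * M) := by rw [IsIdempotentElem, ← Matrix.mul_assoc, hBMB]
  have hMBM' : M * (B * M) = M := by rw [← Matrix.mul_assoc, hMBM]
  have hrankBM : (B * M).rank = p := by
    refine le_antisymm ((rank_mul_le_right B M).trans hrank.le) ?_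
    calc p = (M * (B * M)).rank := by rw [hMBM', hrank]
      _ ≤ (B * M).rank := rank_mul_le_right M (B * M)
  refine opNorm_le_of_forall fun y hy => ?_
  have hrow : (B * M) *ᵥ (B *ᵥ y) = B *ᵥ y := by rw [mulVec_mulVec, hBMB]
  rw [← one_div, le_div_iff₀' hσ]
  calc singularValue p M * euclNorm (B *ᵥ y) ≤ euclNorm (M *ᵥ (B *ᵥ y)) :=
        singularValue_mul_euclNorm_le_of_projection hBMsymm hBMidem hMBM' hrankBM hrow
    _ = euclNorm ((M * B) *ᵥ y) := by rw [mulVec_mulVec]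
    _ ≤ euclNorm y := euclNorm_mulVec_le_of_isSymm_of_isIdempotentElem hMBsymm hMBidem y
    _ ≤ 1 := hy

end MatrixNorms

theorem rank_and_pinv_opNorm_of_opNorm_perturbation_general
    {n m p : ℕ} (A Ahat : Matrix (Fin n) (Fin m) ℝ)
    (hσA : 0 < singularValue p A)
    (hrankAhat : Ahat.rank ≤ p)
    (hpert : opNorm (Ahat - A) ≤ singularValue p A / 2) :
    Ahat.rank = p ∧ singularValue p A / 2 ≤ singularValue p Ahat ∧
      ∀ B : Matrix (Fin m) (Fin n) ℝ, IsPenroseInverse Ahat B →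
        opNorm B ≤ 2 / singularValue p A := by
  have hσAhat : singularValue p A / 2 ≤ singularValue p Ahat := by
    linarith [singularValue_sub_opNorm_le p A Ahat]
  have hσAhat_pos : 0 < singularValue p Ahat := by linarith
  have hrank : Ahat.rank = p := hrankAhat.antisymm (le_rank_of_singularValue_pos hσAhat_pos)
  refine ⟨hrank, hσAhat, fun B hB => ?_⟩
  calc opNorm B ≤ (singularValue p Ahat)⁻¹ := hB.opNorm_le_inv_singularValue hrank hσAhat_pos
    _ ≤ (singularValue p A / 2)⁻¹ := inv_anti₀ (by positivity) hσAhat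
    _ = 2 / singularValue p A := inv_div _ _

/-- If `rank A = p`, `σ_p(A) > 0`, `rank Â ≤ p` and
`‖Â − A‖_op ≤ σ_p(A)/2`, then `rank Â = p`, `σ_p(Â) ≥ σ_p(A)/2`, and any pseudoinverse `B`
of `Â` (satisfying the Penrose equations) has `‖B‖_op ≤ 2/σ_p(A)`. -/
theorem rank_and_pinv_opNorm_of_opNorm_perturbation
    {n m p : ℕ} (A Ahat : Matrix (Fin n) (Fin m) ℝ)
    (hrankA : A.rank = p) (hσA : 0 < singularValue p A)
    (hrankAhat : Ahat.rank ≤ p)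
    (hpert : opNorm (Ahat - A) ≤ singularValue p A / 2) :
    Ahat.rank = p ∧ singularValue p A / 2 ≤ singularValue p Ahat ∧
      ∀ B : Matrix (Fin m) (Fin n) ℝ, IsPenroseInverse Ahat B →
        opNorm B ≤ 2 / singularValue p A :=
  rank_and_pinv_opNorm_of_opNorm_perturbation_general A Ahat hσA hrankAhat hpert
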